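/- Let n ≥ 3 be an integer and let δ be one of the resonant values 2/n, (n+2)/(2n), 1, (n+1)/n, (n+2)/n. For λ ∈ ℝ and μ = λ + δ, the linear system (2−nδ)γ₁−(γ₂+γ₃)=−1/2; (n(1−2δ)+2)γ₄−γ₅=nλγ₁; 2(n(1−δ)+1)γ₅=nλ(γ₂+γ₃); (1−δ)γ₂=λ; (2+n(1−δ))(γ₂+γ₃)=nλ+1 admits a solution (γ₁,…,γ₅) ∈ ℝ⁵ if and only if the pair (λ,μ) is as follows: for δ = 2/n, (λ,μ) = ((n−2)/(2n), (n+2)/(2n)); for δ = (n+2)/(2n), (λ,μ) ∈ {(0, (n+2)/(2n)), ((n−2)/(2n), 1)}; for δ = 1, (λ,μ) = (0,1); for δ = (n+1)/n, (λ,μ) ∈ {(0, (n+1)/n), (−1/n, 1)}; for δ = (n+2)/n, (λ,μ) = (−1/n, (n+1)/n). -/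

import Mathlib

set_option maxHeartbeats 1000000


/-- The linear system (from the equivariance equation) characterizing the
coefficients `(γ₁,…,γ₅)` of the conformally equivariant quantization map on
second-order symbols. -/
def quantSystem (n : ℕ) (lam dlt : ℝ) (g1 g2 g3 g4 g5 : ℝ) : Prop :=
  (2 - (n : ℝ) * dlt) * g1 - (g2 + g3) = -(1 / 2) ∧
  ((n : ℝ) * (1 - 2 * dlt) + 2) * g4 - g5 = (n : ℝ) * lam * g1 ∧
  2 * ((n : ℝ) * (1 - dlt) + 1) * g5 = (n : ℝ) * lam * (g2 + g3) ∧
  (1 - dlt) * g2 = lam ∧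
  (2 + (n : ℝ) * (1 - dlt)) * (g2 + g3) = (n : ℝ) * lam + 1

/-- in the resonant cases, the system is solvable exactly for the
special pairs `(λ,μ)` of the table. -/
theorem quantSystem_resonant_solvability (n : ℕ) (hn : 3 ≤ n)
    (lam mu dlt : ℝ) (hmu : mu = lam + dlt)
    (hres : dlt ∈ ({2 / (n : ℝ), ((n : ℝ) + 2) / (2 * (n : ℝ)), 1,
      ((n : ℝ) + 1) / (n : ℝ), ((n : ℝ) + 2) / (n : ℝ)} : Set ℝ)) :
    (∃ g1 g2 g3 g4 g5 : ℝ, quantSystem n lam dlt g1 g2 g3 g4 g5) ↔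
      ((dlt = 2 / (n : ℝ) ∧
          lam = ((n : ℝ) - 2) / (2 * (n : ℝ)) ∧ mu = ((n : ℝ) + 2) / (2 * (n : ℝ))) ∨
       (dlt = ((n : ℝ) + 2) / (2 * (n : ℝ)) ∧
          ((lam = 0 ∧ mu = ((n : ℝ) + 2) / (2 * (n : ℝ))) ∨
           (lam = ((n : ℝ) - 2) / (2 * (n : ℝ)) ∧ mu = 1))) ∨
       (dlt = 1 ∧ lam = 0 ∧ mu = 1) ∨
       (dlt = ((n : ℝ) + 1) / (n : ℝ) ∧
          ((lam = 0 ∧ mu = ((n : ℝ) + 1) / (n : ℝ)) ∨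
           (lam = -(1 / (n : ℝ)) ∧ mu = 1))) ∨
       (dlt = ((n : ℝ) + 2) / (n : ℝ) ∧
          lam = -(1 / (n : ℝ)) ∧ mu = ((n : ℝ) + 1) / (n : ℝ))) := by
  have hN : (3:ℝ) ≤ (n:ℝ) := by exact_mod_cast hn
  have h0 : (n:ℝ) ≠ 0 := by intro h; rw [h] at hN; norm_num at hN
  have hm1 : (n:ℝ) - 1 ≠ 0 := by intro h; nlinarith
  have hm2 : (n:ℝ) - 2 ≠ 0 := by intro h; nlinarith
  have hp2 : (n:ℝ) + 2 ≠ 0 := by intro h; nlinarith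
  simp only [Set.mem_insert_iff, Set.mem_singleton_iff] at hres
  constructor
  · rintro ⟨g1, g2, g3, g4, g5, e1, e2, e3, e4, e5⟩
    rcases hres with hd | hd | hd | hd | hd <;> subst hd
    · -- δ = 2/n
      refine Or.inl ⟨rfl, ?_, ?_⟩
      · field_simp at e1 e5 ⊢
        linear_combination (-2 : ℝ) * e5 - (n:ℝ) * e1
      · have hl : lam = ((n:ℝ) - 2) / (2 * (n:ℝ)) := by
          field_simp at e1 e5 ⊢
          linear_combination (-2 : ℝ) * e5 - (n:ℝ) * e1
        rw [hmu, hl]; field_simp; ring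
    · -- δ = (n+2)/(2n)
      refine Or.inr (Or.inl ⟨rfl, ?_⟩)
      field_simp at e1 e2 e3 e5
      have h2n : (2:ℝ) * (n:ℝ)^2 ≠ 0 := by positivity
      have key : lam * (2 * (n:ℝ) * lam + 2 - (n:ℝ)) = 0 := by
        apply mul_left_cancel₀ h2n
        rw [mul_zero]
        linear_combination (-2 * (n:ℝ) * (2 - (n:ℝ))) * e3 + (-2 * (n:ℝ)^2 * (2 - (n:ℝ))) * e2 +
          (-2 * (n:ℝ)^2 * lam) * e5 + (-2 * (n:ℝ)^3 * lam) * e1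
      rcases mul_eq_zero.1 key with hl | hl
      · exact Or.inl ⟨hl, by rw [hmu, hl]; ring⟩
      · have hl' : lam = ((n:ℝ) - 2) / (2 * (n:ℝ)) := by field_simp; linarith
        refine Or.inr ⟨hl', ?_⟩
        rw [hmu, hl']; field_simp; ring
    · -- δ = 1
      have hl : lam = 0 := by linear_combination -e4
      exact Or.inr (Or.inr (Or.inl ⟨rfl, hl, by rw [hmu, hl]; ring⟩))
    · -- δ = (n+1)/n
      refine Or.inr (Or.inr (Or.inr (Or.inl ⟨rfl, ?_⟩)))
      field_simp at e3 e5
      have e3' : (n:ℝ) * lam * (g2 + g3) = 0 := by linear_combination -e3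
      rcases mul_eq_zero.1 e3' with h3 | h3
      · rcases mul_eq_zero.1 h3 with h | hl
        · exact absurd h h0
        · exact Or.inl ⟨hl, by rw [hmu, hl]; ring⟩
      · rw [h3] at e5
        have hl : lam = -(1 / (n:ℝ)) := by field_simp; linarith
        refine Or.inr ⟨hl, ?_⟩
        rw [hmu, hl]; field_simp; ring
    · -- δ = (n+2)/n
      refine Or.inr (Or.inr (Or.inr (Or.inr ⟨rfl, ?_, ?_⟩)))
      · field_simp at e5
        have h5 : ((n:ℝ) * lam + 1) * (n:ℝ) = 0 := by linear_combination (-(n:ℝ)) * e5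
        rcases mul_eq_zero.1 h5 with h | h
        · field_simp; linarith
        · exact absurd h h0
      · have hl : lam = -(1 / (n:ℝ)) := by
          field_simp at e5 ⊢
          have h5 : ((n:ℝ) * lam + 1) * (n:ℝ) = 0 := by linear_combination (-(n:ℝ)) * e5
          rcases mul_eq_zero.1 h5 with h | h
          · linarith
          · exact absurd h h0
        rw [hmu, hl]; field_simp; ring
  · rintro (⟨hd, hl, -⟩ | ⟨hd, (⟨hl, -⟩ | ⟨hl, -⟩)⟩ | ⟨hd, hl, -⟩ |
      ⟨hd, (⟨hl, -⟩ | ⟨hl, -⟩)⟩ | ⟨hd, hl, -⟩) <;> subst hd <;> subst hl <;>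
      simp only [quantSystem]
    · refine ⟨0, 1/2, 0, 1/(8*((n:ℝ)-1)), ((n:ℝ)-2)/(8*((n:ℝ)-1)), ?_, ?_, ?_, ?_, ?_⟩ <;>
        first | (field_simp; done) | (field_simp; ring1) | (field_simp; left; ring1) | (field_simp; tauto) | norm_num
    · refine ⟨1/((n:ℝ)+2), 0, 2/((n:ℝ)+2), 0, 0, ?_, ?_, ?_, ?_, ?_⟩ <;>
        first | (field_simp; done) | (field_simp; ring1) | (field_simp; left; ring1) | (field_simp; tauto) | norm_num
    · refine ⟨-1/((n:ℝ)+2), 1, -2/((n:ℝ)+2), 0, ((n:ℝ)-2)/(2*((n:ℝ)+2)), ?_, ?_, ?_, ?_, ?_⟩ <;>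
        first | (field_simp; done) | (field_simp; ring1) | (field_simp; left; ring1) | (field_simp; tauto) | norm_num
    · refine ⟨0, 0, 1/2, 0, 0, ?_, ?_, ?_, ?_, ?_⟩ <;> norm_num
    · refine ⟨-1/(2*((n:ℝ)-1)), 0, 1, 0, 0, ?_, ?_, ?_, ?_, ?_⟩ <;>
        first | (field_simp; done) | (field_simp; ring1) | (field_simp; left; ring1) | (field_simp; tauto) | norm_num
    · refine ⟨1/(2*((n:ℝ)-1)), 1, -1, 1/(2*(n:ℝ)*((n:ℝ)-1)), 0, ?_, ?_, ?_, ?_, ?_⟩ <;>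
        first | (field_simp; done) | (field_simp; ring1) | (field_simp; left; ring1) | (field_simp; tauto) | norm_num
    · refine ⟨1/(2*(n:ℝ)), 1/2, -1/2, 1/(2*(n:ℝ)*((n:ℝ)+2)), 0, ?_, ?_, ?_, ?_, ?_⟩ <;>
        first | (field_simp; done) | (field_simp; ring1) | (field_simp; left; ring1) | (field_simp; tauto) | norm_num
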